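/- Suborbit decomposition: with the setup of the completion-counting lemma, the suborbit S_{t,e} of full assignments with statistic t = c that extend evidence e (with type counts d) satisfies |S_{t,e}| = ∑_{A ∈ 𝒜_{t,e}} |γ(A)|, where 𝒜_{t,e} is the set of matrices A with row sums c, column sums d, and support contained in the compatibility relation, and γ(A) partitions the completions represented distinctly (γ(A) ∩ γ(A') = ∅ for A ≠ A'). -/

import Mathlib

/-!
A completion `f` of the evidence `τ` determines its joint count matrix
`A b m = #{ℓ | τ ℓ = m ∧ f ℓ = b}`. Its column sums are the type counts `d`, its row sums
are the counting statistic of `f`, and it vanishes off the compatibility relation, so the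
matrices of the completions in `S_{t,e}` are exactly the members of `𝒜_{t,e}`, and `γ(A)`
is the fibre of the map `f ↦ A` over `A`. The decomposition is the fibrewise count of
`S_{t,e}` along this map.
-/

open Finset

section JointCount

variable {ι β μ : Type*} [Fintype ι] [DecidableEq β] [DecidableEq μ]

def jointCount (τ : ι → μ) (f : ι → β) (b : β) (m : μ) : ℕ :=
  #{ℓ | τ ℓ = m ∧ f ℓ = b}

theorem sum_jointCount_fst [Fintype β] (τ : ι → μ) (f : ι → β) (m : μ) :
    ∑ b, jointCount τ f b m = #{ℓ | τ ℓ = m} := by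
  rw [card_eq_sum_card_fiberwise (f := f) (t := univ) fun _ _ => mem_univ _]
  simp only [jointCount, filter_filter]

theorem sum_jointCount_snd [Fintype μ] (τ : ι → μ) (f : ι → β) (b : β) :
    ∑ m, jointCount τ f b m = #{ℓ | f ℓ = b} := by
  rw [card_eq_sum_card_fiberwise (f := τ) (t := univ) fun _ _ => mem_univ _]
  simp only [jointCount, filter_filter, and_comm]

theorem jointCount_eq_zero_of_not_rel {R : μ → β → Prop} {τ : ι → μ} {f : ι → β}
    (hf : ∀ ℓ, R (τ ℓ) (f ℓ)) {b : β} {m : μ} (hbm : ¬ R m b) : jointCount τ f b m = 0 := by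
  rw [jointCount, card_eq_zero, filter_eq_empty_iff]
  rintro ℓ - ⟨rfl, rfl⟩
  exact hbm (hf ℓ)

end JointCount

theorem suborbit_decomposition_general {w k : ℕ}
    (τ : Fin k → (Fin w → Option Bool))
    (d : (Fin w → Option Bool) → ℕ)
    (hd : ∀ m, (Finset.univ.filter (fun ℓ => τ ℓ = m)).card = d m)
    (c : (Fin w → Bool) → ℕ)
    (𝒜 : Finset ((Fin w → Bool) → (Fin w → Option Bool) → ℕ))
    (h𝒜 : ∀ A, A ∈ 𝒜 ↔
      ((∀ m, ∑ b, A b m = d m) ∧ (∀ b, ∑ m, A b m = c b) ∧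
       (∀ (b : Fin w → Bool) (m : Fin w → Option Bool),
         ¬ (∀ p v, m p = some v → b p = v) → A b m = 0)))
    (γ : ((Fin w → Bool) → (Fin w → Option Bool) → ℕ) →
      Finset (Fin k → (Fin w → Bool)))
    (hγ : ∀ A, γ A = Finset.univ.filter (fun f : Fin k → (Fin w → Bool) =>
        (∀ ℓ p v, τ ℓ p = some v → f ℓ p = v) ∧
        ∀ b m, (Finset.univ.filter (fun ℓ => τ ℓ = m ∧ f ℓ = b)).card = A b m)) :
    (Finset.univ.filter (fun x : Fin k → (Fin w → Bool) =>
        (∀ ℓ p v, τ ℓ p = some v → x ℓ p = v) ∧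
        ∀ b, (Finset.univ.filter (fun ℓ => x ℓ = b)).card = c b)).card
      = ∑ A ∈ 𝒜, (γ A).card ∧
    (∀ A ∈ 𝒜, ∀ A' ∈ 𝒜, A ≠ A' → Disjoint (γ A) (γ A')) := by
  have mem_γ : ∀ A f, f ∈ γ A ↔
      (∀ ℓ p v, τ ℓ p = some v → f ℓ p = v) ∧ jointCount τ f = A := by
    intro A f
    simp only [hγ, mem_filter, mem_univ, true_and, funext_iff, jointCount, eq_comm]
  have matrix_mem : ∀ f, (∀ ℓ p v, τ ℓ p = some v → f ℓ p = v) →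
      (jointCount τ f ∈ 𝒜 ↔ ∀ b, #{ℓ | f ℓ = b} = c b) := fun f hf => by
    have off_support : ∀ b m, ¬ (∀ p v, m p = some v → b p = v) → jointCount τ f b m = 0 :=
      fun _ _ => jointCount_eq_zero_of_not_rel
        (R := fun (m : Fin w → Option Bool) (b : Fin w → Bool) => ∀ p v, m p = some v → b p = v) hf
    simp only [h𝒜, sum_jointCount_fst, hd, sum_jointCount_snd, implies_true, true_and,
      and_iff_left off_support]
  refine ⟨?_, fun A _ A' _ hAA' => disjoint_left.2 fun f hA hA' =>
    hAA' (((mem_γ A f).1 hA).2.symm.trans ((mem_γ A' f).1 hA').2)⟩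
  rw [card_eq_sum_card_fiberwise (f := jointCount τ) (t := 𝒜)
    fun f hf => (matrix_mem f (mem_filter.1 hf).2.1).2 (mem_filter.1 hf).2.2]
  refine sum_congr rfl fun A hA => congrArg card (ext fun f => ?_)
  simp only [mem_filter, mem_univ, true_and, mem_γ]
  constructor
  · rintro ⟨⟨hf, -⟩, rfl⟩
    exact ⟨hf, rfl⟩
  · rintro ⟨hf, rfl⟩
    exact ⟨⟨hf, (matrix_mem f hf).1 hA⟩, rfl⟩

/-- suborbit decomposition: the suborbit `S_{t,e}` of full
assignments with counting statistic `c` extending the evidence (of type map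
`τ` with type counts `d`) decomposes as the disjoint union of the completion
sets `γ(A)` over all valid transport matrices `A ∈ 𝒜_{t,e}`:
`|S_{t,e}| = ∑_{A ∈ 𝒜_{t,e}} |γ(A)|`, with the `γ(A)` pairwise disjoint. -/
theorem suborbit_decomposition {w k : ℕ}
    (τ : Fin k → (Fin w → Option Bool))
    (d : (Fin w → Option Bool) → ℕ)
    (hd : ∀ m, (Finset.univ.filter (fun ℓ => τ ℓ = m)).card = d m)
    (c : (Fin w → Bool) → ℕ) (hc : ∑ b, c b = k)
    (𝒜 : Finset ((Fin w → Bool) → (Fin w → Option Bool) → ℕ))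
    (h𝒜 : ∀ A, A ∈ 𝒜 ↔
      ((∀ m, ∑ b, A b m = d m) ∧ (∀ b, ∑ m, A b m = c b) ∧
       (∀ (b : Fin w → Bool) (m : Fin w → Option Bool),
         ¬ (∀ p v, m p = some v → b p = v) → A b m = 0)))
    (γ : ((Fin w → Bool) → (Fin w → Option Bool) → ℕ) →
      Finset (Fin k → (Fin w → Bool)))
    (hγ : ∀ A, γ A = Finset.univ.filter (fun f : Fin k → (Fin w → Bool) =>
        (∀ ℓ p v, τ ℓ p = some v → f ℓ p = v) ∧
        ∀ b m, (Finset.univ.filter (fun ℓ => τ ℓ = m ∧ f ℓ = b)).card = A b m)) :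
    (Finset.univ.filter (fun x : Fin k → (Fin w → Bool) =>
        (∀ ℓ p v, τ ℓ p = some v → x ℓ p = v) ∧
        ∀ b, (Finset.univ.filter (fun ℓ => x ℓ = b)).card = c b)).card
      = ∑ A ∈ 𝒜, (γ A).card ∧
    (∀ A ∈ 𝒜, ∀ A' ∈ 𝒜, A ≠ A' → Disjoint (γ A) (γ A')) :=
  suborbit_decomposition_general τ d hd c 𝒜 h𝒜 γ hγ
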